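/- arXiv:1204.4483 — 7 statements merged into one kernel-verified Lean document; each statement's English description precedes it below -/
import Mathlib

section
/- If an ordered field R satisfies the Intermediate Value Property—for every function f : [a,b] → R continuous (in the order topology) with f(a) < 0 and f(b) > 0 there is c in (a,b) with f(c) = 0—then R is Dedekind complete. -/
/-!
If a bounded nonempty set `S` has no supremum, its set of upper bounds is clopen: it is always
closed, and it is open because each upper bound lies above a smaller one. The step function equal
to `1` on the upper bounds and `-1` elsewhere is then continuous, negative below an element of `S`
and positive at an upper bound, yet never zero, contradicting the intermediate value property.
-/

open Set

theorem isClosed_upperBounds {α : Type*} [Preorder α] [TopologicalSpace α] [ClosedIciTopology α]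
    (S : Set α) : IsClosed (upperBounds S) := by
  have hS : upperBounds S = ⋂ s ∈ S, Ici s := by ext; simp [upperBounds]
  exact hS ▸ isClosed_biInter fun s _ => isClosed_Ici

theorem isOpen_upperBounds_of_forall_not_isLUB {α : Type*} [LinearOrder α] [TopologicalSpace α]
    [ClosedIicTopology α] {S : Set α} (hS : ∀ c, ¬IsLUB S c) : IsOpen (upperBounds S) := by
  refine isOpen_iff_mem_nhds.mpr fun x hx => ?_
  obtain ⟨y, hy, hyx⟩ : ∃ y ∈ upperBounds S, y < x := by
    simpa [IsLUB, IsLeast, hx, lowerBounds] using hS x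
  exact Filter.mem_of_superset (Ioi_mem_nhds hyx) fun z hz => upperBounds_mono_mem hz.le hy

theorem not_isClopen_of_ivp {R : Type*} [Ring R] [LinearOrder R] [IsStrictOrderedRing R]
    [TopologicalSpace R]
    (hivp : ∀ (a b : R) (f : R → R), a < b → ContinuousOn f (Icc a b) →
      f a < 0 → 0 < f b → ∃ c ∈ Ioo a b, f c = 0)
    {U : Set R} {a b : R} (hab : a < b) (ha : a ∉ U) (hb : b ∈ U) : ¬IsClopen U := by
  intro hU
  classical
  have hcont : Continuous (U.piecewise (fun _ => (1 : R)) fun _ => -1) :=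
    continuous_const.piecewise (fun x hx => by simp [hU.frontier_eq] at hx) continuous_const
  obtain ⟨c, -, hc⟩ := hivp a b _ hab hcont.continuousOn (by simp [ha]) (by simp [hb])
  by_cases hcU : c ∈ U <;> simp [hcU] at hc

theorem ivp_implies_dedekind_complete
    {R : Type*} [Field R] [LinearOrder R] [IsStrictOrderedRing R] [TopologicalSpace R] [OrderTopology R]
    (hivp : ∀ (a b : R) (f : R → R), a < b → ContinuousOn f (Set.Icc a b) →
      f a < 0 → 0 < f b → ∃ c ∈ Set.Ioo a b, f c = 0) :
    ∀ S : Set R, S.Nonempty → BddAbove S → ∃ c : R, IsLUB S c := by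
  rintro S ⟨s, hs⟩ ⟨b, hb⟩
  by_contra! hS
  have hs_sub : s - 1 ∉ upperBounds S := fun h => (sub_one_lt s).not_ge (h hs)
  exact not_isClopen_of_ivp hivp ((sub_one_lt s).trans_le (hb hs)) hs_sub hb
    ⟨isClosed_upperBounds S, isOpen_upperBounds_of_forall_not_isLUB hS⟩
end

section
/- If every bounded monotone increasing sequence in an ordered field R converges, then R is Dedekind complete. -/
/-!
Monotone convergence applied to `n ↦ n` forces `R` to be Archimedean. Given `S`, bisect an
interval `[a, b]` with `a` below some element of `S` and `b` an upper bound of `S`, keeping these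
two properties. The left endpoints increase and are bounded, so converge to some `L`; the lengths
halve, so by the Archimedean property the right endpoints converge to `L` as well, and `L` is
squeezed into being the least upper bound.
-/

open Filter Topology Set

theorem isLUB_of_tendsto_of_tendsto {α : Type*} [Preorder α] [TopologicalSpace α]
    [OrderClosedTopology α] {S : Set α} {a b : ℕ → α} {L : α}
    (ha : Tendsto a atTop (𝓝 L)) (hb : Tendsto b atTop (𝓝 L))
    (has : ∀ n, ∃ s ∈ S, a n ≤ s) (hbS : ∀ n, b n ∈ upperBounds S) : IsLUB S L :=
  ⟨fun _ hs => ge_of_tendsto' hb fun n => hbS n hs,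
    fun _ hu => le_of_tendsto' ha fun n =>
      let ⟨_, hs, hle⟩ := has n
      hle.trans (hu hs)⟩

theorem archimedean_of_forall_monotone_tendsto {K : Type*} [Field K] [LinearOrder K]
    [IsStrictOrderedRing K] [TopologicalSpace K] [OrderTopology K]
    (h : ∀ a : ℕ → K, Monotone a → BddAbove (range a) → ∃ L, Tendsto a atTop (𝓝 L)) :
    Archimedean K := by
  rw [archimedean_iff_nat_lt]
  by_contra! hbdd
  obtain ⟨B, hB⟩ := hbdd
  obtain ⟨L, hL⟩ := h (↑) Nat.mono_cast ⟨B, by rintro _ ⟨n, rfl⟩; exact hB n⟩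
  have hL' : Tendsto (fun n : ℕ => (n : K) + 1) atTop (𝓝 L) := by
    simpa using (tendsto_add_atTop_iff_nat 1).2 hL
  exact (lt_add_one L).ne' (tendsto_nhds_unique (hL.add_const 1) hL')

def IsBracket {α : Type*} [Preorder α] (S : Set α) (p : α × α) : Prop :=
  (∃ s ∈ S, p.1 ≤ s) ∧ p.2 ∈ upperBounds S

theorem IsBracket.fst_le_snd {α : Type*} [Preorder α] {S : Set α} {p : α × α}
    (h : IsBracket S p) : p.1 ≤ p.2 :=
  let ⟨_, hs, hle⟩ := h.1
  hle.trans (h.2 hs)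

section Bisection

variable {K : Type*} [Field K] [LinearOrder K]

open Classical in
noncomputable def bisect (S : Set K) (p : K × K) : K × K :=
  if (p.1 + p.2) / 2 ∈ upperBounds S then (p.1, (p.1 + p.2) / 2) else ((p.1 + p.2) / 2, p.2)

variable {S : Set K}

theorem isBracket_bisect {p : K × K} (h : IsBracket S p) : IsBracket S (bisect S p) := by
  unfold bisect
  split_ifs with hmid
  · exact ⟨h.1, hmid⟩
  · simp only [mem_upperBounds, not_forall, not_le, exists_prop] at hmid
    obtain ⟨s, hs, hlt⟩ := hmid
    exact ⟨⟨s, hs, hlt.le⟩, h.2⟩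

theorem isBracket_iterate_bisect {p : K × K} (h : IsBracket S p) (n : ℕ) :
    IsBracket S ((bisect S)^[n] p) :=
  Function.Iterate.rec _ h (fun _ => isBracket_bisect) n

variable [IsStrictOrderedRing K]

theorem bisect_snd_sub_fst (p : K × K) : (bisect S p).2 - (bisect S p).1 = (p.2 - p.1) / 2 := by
  unfold bisect
  split_ifs <;> ring

theorem iterate_bisect_snd_sub_fst (p : K × K) (n : ℕ) :
    ((bisect S)^[n] p).2 - ((bisect S)^[n] p).1 = (p.2 - p.1) / 2 ^ n := by
  induction n with
  | zero => simp
  | succ n ih => rw [Function.iterate_succ_apply', bisect_snd_sub_fst, ih, pow_succ, div_div]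

theorem fst_le_bisect_fst {p : K × K} (h : p.1 ≤ p.2) : p.1 ≤ (bisect S p).1 := by
  unfold bisect
  split_ifs <;> dsimp only <;> linarith

theorem monotone_iterate_bisect_fst {p : K × K} (h : IsBracket S p) :
    Monotone fun n => ((bisect S)^[n] p).1 :=
  monotone_nat_of_le_succ fun n => by
    rw [Function.iterate_succ_apply']
    exact fst_le_bisect_fst (isBracket_iterate_bisect h n).fst_le_snd

end Bisection

theorem monotone_convergence_implies_dedekind_complete
    {R : Type*} [Field R] [LinearOrder R] [IsStrictOrderedRing R]
    (hmono : ∀ a : ℕ → R, Monotone a → BddAbove (Set.range a) →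
      ∃ L : R, ∀ ε : R, 0 < ε → ∃ N : ℕ, ∀ n ≥ N, |a n - L| < ε) :
    ∀ S : Set R, S.Nonempty → BddAbove S → ∃ c : R, IsLUB S c := by
  rintro S ⟨s₀, hs₀⟩ ⟨b₀, hb₀⟩
  let _ := Preorder.topology R
  have _ : OrderTopology R := ⟨rfl⟩
  have hconv : ∀ a : ℕ → R, Monotone a → BddAbove (range a) → ∃ L, Tendsto a atTop (𝓝 L) :=
    fun a ha hbdd => (hmono a ha hbdd).imp fun L hL =>
      LinearOrderedAddCommGroup.tendsto_nhds.2 fun ε hε =>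
        let ⟨N, hN⟩ := hL ε hε
        eventually_atTop.2 ⟨N, hN⟩
  have _ := archimedean_of_forall_monotone_tendsto hconv
  have hp : IsBracket S (s₀, b₀) := ⟨⟨s₀, hs₀, le_rfl⟩, hb₀⟩
  set a := fun n => ((bisect S)^[n] (s₀, b₀)).1
  set b := fun n => ((bisect S)^[n] (s₀, b₀)).2
  have ha_le : ∀ n, a n ≤ b₀ := fun n =>
    let ⟨s, hs, hle⟩ := (isBracket_iterate_bisect hp n).1
    hle.trans (hb₀ hs)
  obtain ⟨L, ha⟩ := hconv a (monotone_iterate_bisect_fst hp) ⟨b₀, by rintro _ ⟨n, rfl⟩; exact ha_le n⟩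
  have hb : Tendsto b atTop (𝓝 L) := by
    have hgap : Tendsto (fun n => (b₀ - s₀) / 2 ^ n) atTop (𝓝 0) :=
      tendsto_const_nhds.div_atTop (tendsto_pow_atTop_atTop_of_one_lt one_lt_two)
    have hb_eq : b = fun n => a n + (b₀ - s₀) / 2 ^ n :=
      funext fun n => eq_add_of_sub_eq' (iterate_bisect_snd_sub_fst _ n)
    simpa [hb_eq] using ha.add hgap
  exact ⟨L, isLUB_of_tendsto_of_tendsto ha hb (fun n => (isBracket_iterate_bisect hp n).1)
    fun n => (isBracket_iterate_bisect hp n).2⟩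
end

section
/- If an ordered field R satisfies the Ratio Test—whenever a sequence (a_n) in R has |a_{n+1}/a_n| → L with L < 1, the series Σ a_n converges in R—then R is Archimedean. -/
/-! If the ratio test holds, the geometric series `∑ 2⁻ⁿ` (ratio `2⁻¹`) converges, so its terms
become arbitrarily small. Choosing `N` with `2⁻ᴺ < (|x| + 1)⁻¹` gives `x < 2ᴺ`. -/

section

variable {R : Type*} [Field R] [LinearOrder R] [IsStrictOrderedRing R]

lemma exists_abs_sub_succ_lt_of_forall_abs_sub_lt {u : ℕ → R} {S : R}
    (hu : ∀ ε : R, 0 < ε → ∃ N : ℕ, ∀ n ≥ N, |u n - S| < ε) {ε : R} (hε : 0 < ε) :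
    ∃ N : ℕ, |u (N + 1) - u N| < ε := by
  obtain ⟨N, hN⟩ := hu (ε / 2) (half_pos hε)
  refine ⟨N, ?_⟩
  calc |u (N + 1) - u N| ≤ |u (N + 1) - S| + |S - u N| := abs_sub_le _ _ _
    _ < ε / 2 + ε / 2 := by
      rw [abs_sub_comm S]
      exact add_lt_add (hN _ N.le_succ) (hN N le_rfl)
    _ = ε := add_halves ε

lemma exists_abs_lt_of_forall_abs_sum_range_sub_lt {a : ℕ → R} {S : R}
    (ha : ∀ ε : R, 0 < ε → ∃ N : ℕ, ∀ n ≥ N, |(∑ k ∈ Finset.range n, a k) - S| < ε)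
    {ε : R} (hε : 0 < ε) : ∃ N : ℕ, |a N| < ε := by
  obtain ⟨N, hN⟩ := exists_abs_sub_succ_lt_of_forall_abs_sub_lt ha hε
  exact ⟨N, by rwa [Finset.sum_range_succ_sub_sum] at hN⟩

lemma abs_inv_pow_succ_div_inv_pow {r : R} (hr : r ≠ 0) (n : ℕ) :
    |(r ^ (n + 1))⁻¹ / (r ^ n)⁻¹| = |r⁻¹| := by
  rw [pow_succ, mul_inv, mul_div_cancel_left₀ _ (inv_ne_zero (pow_ne_zero n hr))]

end

theorem ratio_test_implies_archimedean
    {R : Type*} [Field R] [LinearOrder R] [IsStrictOrderedRing R]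
    (hratio : ∀ (a : ℕ → R) (L : R), (∀ n, a n ≠ 0) →
      (∀ ε : R, 0 < ε → ∃ N : ℕ, ∀ n ≥ N, |(|a (n + 1) / a n|) - L| < ε) →
      L < 1 →
      ∃ S : R, ∀ ε : R, 0 < ε → ∃ N : ℕ, ∀ n ≥ N,
        |(∑ k ∈ Finset.range n, a k) - S| < ε) :
    ∀ x : R, ∃ n : ℕ, x < (n : R) := by
  intro x
  have hgeom_ratio (ε : R) (hε : 0 < ε) : ∃ N : ℕ, ∀ n ≥ N,
      |(|((2 : R) ^ (n + 1))⁻¹ / ((2 : R) ^ n)⁻¹|) - 2⁻¹| < ε :=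
    ⟨0, fun n _ => by
      rwa [abs_inv_pow_succ_div_inv_pow two_ne_zero, abs_inv, abs_two, sub_self, abs_zero]⟩
  obtain ⟨S, hS⟩ := hratio (fun n => ((2 : R) ^ n)⁻¹) 2⁻¹
    (fun n => inv_ne_zero (pow_ne_zero n two_ne_zero)) hgeom_ratio (by norm_num)
  have hx : 0 < |x| + 1 := by positivity
  obtain ⟨N, hN⟩ := exists_abs_lt_of_forall_abs_sum_range_sub_lt hS (inv_pos.mpr hx)
  rw [abs_of_pos (by positivity), inv_lt_inv₀ (by positivity) hx] at hN
  refine ⟨2 ^ N, ?_⟩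
  push_cast
  linarith [le_abs_self x]
end

section
/- If an ordered field R satisfies the Ratio Test, then R is Dedekind complete. -/
/-!
Bisect `[x, b + 1]`, where `x ∈ S` and `b` bounds `S` above, keeping at every step an upper bound
of `S` as right end and a point below some element of `S` as left end. The midpoints move by a
quarter of the current width, which halves at each step, so their increments are nonzero terms
whose ratio is constantly `1/2`: by the ratio test the midpoints converge. Their increments then
tend to `0`, hence so do the widths, so both ends converge to the same limit, which is the least
upper bound of `S` because the order topology is closed.
-/

open Filter Topology Finset

def RatioTest (R : Type*) [Field R] [LinearOrder R] : Prop :=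
  ∀ (a : ℕ → R) (L : R), (∀ n, a n ≠ 0) →
    (∀ ε : R, 0 < ε → ∃ N : ℕ, ∀ n ≥ N, |(|a (n + 1) / a n|) - L| < ε) →
    L < 1 →
    ∃ S : R, ∀ ε : R, 0 < ε → ∃ N : ℕ, ∀ n ≥ N, |(∑ k ∈ Finset.range n, a k) - S| < ε

theorem isLUB_of_tendsto_of_forall {α β : Type*} [Preorder α] [TopologicalSpace α]
    [OrderClosedTopology α] {l : Filter β} [l.NeBot] {S : Set α} {lo hi : β → α} {c : α}
    (hlo : Tendsto lo l (𝓝 c)) (hhi : Tendsto hi l (𝓝 c))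
    (hlo_le : ∀ i, ∃ s ∈ S, lo i ≤ s) (hhi_mem : ∀ i, hi i ∈ upperBounds S) : IsLUB S c :=
  ⟨fun _ hs ↦ ge_of_tendsto' hhi fun i ↦ hhi_mem i hs,
    fun _ hb ↦ le_of_tendsto' hlo fun i ↦
      let ⟨_, hs, hle⟩ := hlo_le i
      hle.trans (hb hs)⟩

section

variable {R : Type*} [Field R] [LinearOrder R]

def intervalMid (I : R × R) : R := (I.1 + I.2) / 2

open scoped Classical in
noncomputable def bisectStep (S : Set R) (I : R × R) : R × R :=
  if intervalMid I ∈ upperBounds S then (I.1, intervalMid I) else (intervalMid I, I.2)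

variable {S : Set R} {I : R × R}

theorem bisectStep_snd_mem_upperBounds (h : I.2 ∈ upperBounds S) :
    (bisectStep S I).2 ∈ upperBounds S := by
  unfold bisectStep
  split_ifs with hmid
  exacts [hmid, h]

theorem exists_mem_le_bisectStep_fst (h : ∃ s ∈ S, I.1 ≤ s) :
    ∃ s ∈ S, (bisectStep S I).1 ≤ s := by
  unfold bisectStep
  split_ifs with hmid
  · exact h
  · obtain ⟨s, hs, hlt⟩ := not_forall₂.1 hmid
    exact ⟨s, hs, (not_le.1 hlt).le⟩

variable [IsStrictOrderedRing R]

theorem bisectStep_snd_sub_fst (S : Set R) (I : R × R) :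
    (bisectStep S I).2 - (bisectStep S I).1 = (I.2 - I.1) / 2 := by
  unfold bisectStep intervalMid
  split_ifs <;> ring

theorem abs_intervalMid_bisectStep_sub (S : Set R) (I : R × R) :
    |intervalMid (bisectStep S I) - intervalMid I| = |I.2 - I.1| / 4 := by
  have h4 : |(4 : R)| = 4 := abs_of_pos four_pos
  unfold bisectStep intervalMid
  split_ifs
  · rw [show _ - _ = -((I.2 - I.1) / 4) by ring, abs_neg, abs_div, h4]
  · rw [show _ - _ = (I.2 - I.1) / 4 by ring, abs_div, h4]

theorem abs_iterate_bisectStep_snd_sub_fst (S : Set R) (I : R × R) (n : ℕ) :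
    |((bisectStep S)^[n] I).2 - ((bisectStep S)^[n] I).1| = |I.2 - I.1| / 2 ^ n := by
  induction n with
  | zero => simp
  | succ n ih =>
    rw [Function.iterate_succ_apply', bisectStep_snd_sub_fst, abs_div, ih, abs_two, pow_succ,
      div_div]

theorem tendsto_atTop_nhds_iff_abs_sub_lt [TopologicalSpace R] [OrderTopology R]
    {u : ℕ → R} {c : R} :
    Tendsto u atTop (𝓝 c) ↔ ∀ ε : R, 0 < ε → ∃ N, ∀ n ≥ N, |u n - c| < ε := by
  simp only [LinearOrderedAddCommGroup.tendsto_nhds, eventually_atTop, gt_iff_lt]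

namespace RatioTest

variable [TopologicalSpace R] [OrderTopology R]

theorem exists_tendsto_sum (h : RatioTest R) {a : ℕ → R} {r : R} (ha : ∀ n, a n ≠ 0)
    (hr : r < 1) (hratio : ∀ n, |a (n + 1)| = r * |a n|) :
    ∃ T, Tendsto (fun n ↦ ∑ k ∈ range n, a k) atTop (𝓝 T) := by
  have hconst (n : ℕ) : |a (n + 1) / a n| = r := by
    rw [abs_div, hratio, mul_div_cancel_right₀ _ (abs_ne_zero.2 (ha n))]
  obtain ⟨T, hT⟩ := h a r ha (fun ε hε ↦ ⟨0, fun n _ ↦ by simpa [hconst] using hε⟩) hr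
  exact ⟨T, tendsto_atTop_nhds_iff_abs_sub_lt.2 hT⟩

theorem exists_tendsto_of_abs_sub_succ (h : RatioTest R) {u : ℕ → R} {r : R}
    (hne : ∀ n, u (n + 1) ≠ u n) (hr : r < 1)
    (hratio : ∀ n, |u (n + 2) - u (n + 1)| = r * |u (n + 1) - u n|) :
    ∃ c, Tendsto u atTop (𝓝 c) := by
  obtain ⟨T, hT⟩ := h.exists_tendsto_sum (fun n ↦ sub_ne_zero.2 (hne n)) hr hratio
  refine ⟨u 0 + T, ?_⟩
  simpa only [sum_range_sub, add_sub_cancel] using hT.const_add (u 0)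

theorem exists_tendsto_iterate_bisectStep (h : RatioTest R) (S : Set R) (hI : I.1 ≠ I.2) :
    ∃ c, Tendsto (fun n ↦ ((bisectStep S)^[n] I).1) atTop (𝓝 c) ∧
      Tendsto (fun n ↦ ((bisectStep S)^[n] I).2) atTop (𝓝 c) := by
  set J := fun n ↦ (bisectStep S)^[n] I
  have hquarter (n : ℕ) :
      |intervalMid (J (n + 1)) - intervalMid (J n)| = |(J n).2 - (J n).1| / 4 := by
    simp only [J, Function.iterate_succ_apply', abs_intervalMid_bisectStep_sub]
  have hstep (n : ℕ) :
      |intervalMid (J (n + 1)) - intervalMid (J n)| = |I.2 - I.1| / 2 ^ n / 4 := by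
    rw [hquarter, abs_iterate_bisectStep_snd_sub_fst]
  have hwidth : |I.2 - I.1| ≠ 0 := abs_ne_zero.2 (sub_ne_zero.2 hI.symm)
  obtain ⟨c, hc⟩ := h.exists_tendsto_of_abs_sub_succ (u := fun n ↦ intervalMid (J n))
    (r := 1 / 2) (fun n ↦ by rw [← sub_ne_zero, ← abs_ne_zero, hstep]; positivity)
    (by norm_num) (fun n ↦ by rw [hstep, hstep, pow_succ]; ring)
  have hdiff : Tendsto (fun n ↦ intervalMid (J (n + 1)) - intervalMid (J n)) atTop (𝓝 0) := by
    simpa using (hc.comp (tendsto_add_atTop_nat 1)).sub hc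
  have hwidth_zero : Tendsto (fun n ↦ (J n).2 - (J n).1) atTop (𝓝 0) := by
    refine (tendsto_zero_iff_abs_tendsto_zero _).2 ?_
    simpa [Function.comp_def, hquarter, mul_div_cancel₀] using hdiff.abs.const_mul 4
  have hhalf : Tendsto (fun n ↦ ((J n).2 - (J n).1) / 2) atTop (𝓝 0) := by
    simpa using hwidth_zero.div_const 2
  refine ⟨c, ?_, ?_⟩
  · simpa using (hc.sub hhalf).congr fun n ↦ show _ = (J n).1 by unfold intervalMid; ring
  · simpa using (hc.add hhalf).congr fun n ↦ show _ = (J n).2 by unfold intervalMid; ring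

end RatioTest

end

theorem ratio_test_implies_dedekind_complete
    {R : Type*} [Field R] [LinearOrder R] [IsStrictOrderedRing R]
    (hratio : ∀ (a : ℕ → R) (L : R), (∀ n, a n ≠ 0) →
      (∀ ε : R, 0 < ε → ∃ N : ℕ, ∀ n ≥ N, |(|a (n + 1) / a n|) - L| < ε) →
      L < 1 →
      ∃ S : R, ∀ ε : R, 0 < ε → ∃ N : ℕ, ∀ n ≥ N,
        |(∑ k ∈ Finset.range n, a k) - S| < ε) :
    ∀ S : Set R, S.Nonempty → BddAbove S → ∃ c : R, IsLUB S c := by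
  rintro S ⟨x, hx⟩ ⟨b, hb⟩
  let := Preorder.topology R
  have : OrderTopology R := ⟨rfl⟩
  have hxb : x < b + 1 := by linarith [hb hx]
  obtain ⟨c, hlo, hhi⟩ :=
    RatioTest.exists_tendsto_iterate_bisectStep (I := (x, b + 1)) hratio S hxb.ne
  refine ⟨c, isLUB_of_tendsto_of_forall hlo hhi (fun n ↦ ?_) (fun n ↦ ?_)⟩
  · exact Function.Iterate.rec _ ⟨x, hx, le_rfl⟩ (fun _ ↦ exists_mem_le_bisectStep_fst) n
  · exact Function.Iterate.rec _ (fun s hs ↦ (hb hs).trans (by linarith))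
      (fun _ ↦ bisectStep_snd_mem_upperBounds) n
end

section
/- Every Cauchy sequence in the ordered field of formal Laurent series R((ε)) converges; thus Cauchy completeness of an ordered field does not imply Dedekind completeness. -/
/-!
Ordering `K` by the sign of the leading coefficient makes `x ↦ toLex (e x)` an order embedding
into the lexicographically ordered Hahn series, where a series of larger order is smaller in
absolute value. So `|x| < η` is controlled by comparing the orders of `e x` and `e η`, and, since
`ε ^ k` is positive of order `k`, a Cauchy sequence in `K` has Laurent coefficients that are
eventually constant below every degree. The eventual coefficients vanish below the order of a
single term, so they form a Laurent series, which is the limit. On the other hand `ε⁻¹` bounds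
every natural number, and in an ordered field a supremum of `ℕ` cannot exist.
-/

open HahnSeries

section OrderTop

variable {K Γ R F : Type*} [AddCommGroup K] [LinearOrder K] [IsOrderedAddMonoid K]
  [LinearOrder Γ] [AddCommGroup R] [LinearOrder R] [IsOrderedAddMonoid R]
  [FunLike F K R⟦Γ⟧] [AddMonoidHomClass F K R⟦Γ⟧] {e : F}

theorem strictMono_toLex_of_pos_iff (horder : ∀ x : K, 0 < x ↔ 0 < (e x).leadingCoeff) :
    StrictMono fun x ↦ toLex (e x) := by
  intro x y hxy
  rw [← sub_pos, ← leadingCoeff_pos_iff]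
  simpa [← map_sub] using (horder (y - x)).mp (sub_pos.mpr hxy)

theorem toLex_abs_of_pos_iff (horder : ∀ x : K, 0 < x ↔ 0 < (e x).leadingCoeff) (x : K) :
    toLex (e |x|) = |toLex (e x)| := by
  rw [abs_eq_max_neg, abs_eq_max_neg, (strictMono_toLex_of_pos_iff horder).monotone.map_max,
    map_neg, toLex_neg]

theorem abs_lt_abs_of_orderTop_lt (horder : ∀ x : K, 0 < x ↔ 0 < (e x).leadingCoeff) {x y : K}
    (h : (e y).orderTop < (e x).orderTop) : |x| < |y| := by
  rw [← (strictMono_toLex_of_pos_iff horder).lt_iff_lt, toLex_abs_of_pos_iff horder,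
    toLex_abs_of_pos_iff horder]
  exact abs_lt_abs_of_orderTop_ofLex h

theorem abs_lt_of_orderTop_lt (horder : ∀ x : K, 0 < x ↔ 0 < (e x).leadingCoeff) {x y : K}
    (hy : 0 < y) (h : (e y).orderTop < (e x).orderTop) : |x| < y :=
  abs_of_pos hy ▸ abs_lt_abs_of_orderTop_lt horder h

theorem orderTop_le_of_abs_lt (horder : ∀ x : K, 0 < x ↔ 0 < (e x).leadingCoeff) {x y : K}
    (h : |x| < y) : (e y).orderTop ≤ (e x).orderTop :=
  not_lt.mp fun h' ↦ (h.trans_le (le_abs_self y)).not_gt (abs_lt_abs_of_orderTop_lt horder h')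

end OrderTop

namespace LaurentSeries

variable {R : Type*} [AddGroup R]

theorem exists_coeff_eventually_eq {b : ℕ → LaurentSeries R}
    (hb : ∀ k : ℤ, ∃ N, ∀ m ≥ N, ∀ n ≥ N, (k : WithTop ℤ) ≤ (b m - b n).orderTop) :
    ∃ c : ℤ → R, ∀ k : ℤ, ∃ N, ∀ n ≥ N, ∀ j < k, (b n).coeff j = c j := by
  have hstable : ∀ k : ℤ, ∃ N, ∀ m ≥ N, ∀ n ≥ N, ∀ j < k, (b m).coeff j = (b n).coeff j := by
    intro k
    obtain ⟨N, hN⟩ := hb k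
    refine ⟨N, fun m hm n hn j hj ↦ ?_⟩
    rw [← sub_eq_zero, ← coeff_sub]
    exact le_orderTop_iff_forall.mp (hN m hm n hn) j (WithTop.coe_lt_coe.mpr hj)
  choose N hN using hstable
  refine ⟨fun j ↦ (b (N (j + 1))).coeff j, fun k ↦ ⟨N k, fun n hn j hj ↦ ?_⟩⟩
  calc (b n).coeff j = (b (max n (N (j + 1)))).coeff j :=
        hN k n hn _ (hn.trans (le_max_left _ _)) j hj
    _ = (b (N (j + 1))).coeff j := hN (j + 1) _ (le_max_right _ _) _ le_rfl j (lt_add_one j)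

theorem exists_forall_le_orderTop_sub {b : ℕ → LaurentSeries R}
    (hb : ∀ k : ℤ, ∃ N, ∀ m ≥ N, ∀ n ≥ N, (k : WithTop ℤ) ≤ (b m - b n).orderTop) :
    ∃ L : LaurentSeries R, ∀ k : ℤ, ∃ N, ∀ n ≥ N, (k : WithTop ℤ) ≤ (b n - L).orderTop := by
  obtain ⟨c, hc⟩ := exists_coeff_eventually_eq hb
  choose N hN using hc
  have hbdd : BddBelow (Function.support c) := by
    -- below degree `0`, `c` agrees with `b (N 0)`
    refine ⟨min 0 (b (N 0)).order, fun j hj ↦ ?_⟩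
    by_contra! hlt
    rw [lt_min_iff] at hlt
    exact hj (hN 0 (N 0) le_rfl j hlt.1 ▸ coeff_eq_zero_of_lt_order hlt.2)
  refine ⟨ofSuppBddBelow c hbdd, fun k ↦ ⟨N k, fun n hn ↦ le_orderTop_iff_forall.mpr ?_⟩⟩
  intro j hj
  rw [coeff_sub, coeff_ofSuppBddBelow, hN k n hn j (WithTop.coe_lt_coe.mp hj), sub_self]

end LaurentSeries

section OrderedRing

variable {K R F : Type*} [LinearOrder R] [Ring R] [IsStrictOrderedRing R]

theorem exists_pos_orderTop_eq [AddCommGroup K] [LinearOrder K] [IsOrderedAddMonoid K]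
    [FunLike F K (LaurentSeries R)] [AddMonoidHomClass F K (LaurentSeries R)] {e : F}
    (horder : ∀ x : K, 0 < x ↔ 0 < (e x).leadingCoeff) (he : Function.Surjective e) (k : ℤ) :
    ∃ η : K, 0 < η ∧ (e η).orderTop = k := by
  obtain ⟨η, hη⟩ := he (single k 1)
  refine ⟨η, ?_, ?_⟩
  · rw [horder, hη, leadingCoeff_of_single]
    exact one_pos
  · rw [hη, orderTop_single one_ne_zero]

theorem exists_forall_abs_sub_lt_of_cauchy [AddCommGroup K] [LinearOrder K]
    [IsOrderedAddMonoid K] [FunLike F K (LaurentSeries R)]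
    [AddMonoidHomClass F K (LaurentSeries R)] {e : F}
    (horder : ∀ x : K, 0 < x ↔ 0 < (e x).leadingCoeff) (he : Function.Surjective e)
    (a : ℕ → K) (ha : ∀ η : K, 0 < η → ∃ N : ℕ, ∀ m ≥ N, ∀ n ≥ N, |a m - a n| < η) :
    ∃ L : K, ∀ η : K, 0 < η → ∃ N : ℕ, ∀ n ≥ N, |a n - L| < η := by
  have hcauchy : ∀ k : ℤ, ∃ N, ∀ m ≥ N, ∀ n ≥ N,
      (k : WithTop ℤ) ≤ (e (a m) - e (a n)).orderTop := by
    intro k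
    obtain ⟨η, hη, hηk⟩ := exists_pos_orderTop_eq horder he k
    obtain ⟨N, hN⟩ := ha η hη
    refine ⟨N, fun m hm n hn ↦ ?_⟩
    rw [← hηk, ← map_sub]
    exact orderTop_le_of_abs_lt horder (hN m hm n hn)
  obtain ⟨L, hL⟩ := LaurentSeries.exists_forall_le_orderTop_sub hcauchy
  obtain ⟨L, rfl⟩ := he L
  refine ⟨L, fun η hη ↦ ?_⟩
  have hne : e η ≠ 0 := leadingCoeff_ne_zero.mp ((horder η).mp hη).ne'
  obtain ⟨N, hN⟩ := hL ((e η).order + 1)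
  refine ⟨N, fun n hn ↦ abs_lt_of_orderTop_lt horder hη ?_⟩
  rw [← order_eq_orderTop_of_ne_zero hne, map_sub]
  exact (WithTop.coe_lt_coe.mpr (lt_add_one _)).trans_le (hN n hn)

theorem bddAbove_range_natCast_of_pos_iff [Ring K] [LinearOrder K] [IsOrderedRing K]
    [FunLike F K (LaurentSeries R)] [RingHomClass F K (LaurentSeries R)] {e : F}
    (horder : ∀ x : K, 0 < x ↔ 0 < (e x).leadingCoeff) (he : Function.Surjective e) :
    BddAbove (Set.range ((↑) : ℕ → K)) := by
  obtain ⟨y, hy, hyk⟩ := exists_pos_orderTop_eq horder he (-1)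
  refine ⟨y, fun _ ⟨n, hn⟩ ↦ hn ▸ (le_abs_self (n : K)).trans ?_⟩
  refine (abs_lt_of_orderTop_lt horder hy ?_).le
  rw [hyk, map_natCast, ← single_zero_natCast]
  exact (WithTop.coe_lt_coe.mpr (by norm_num)).trans_le orderTop_single_le

end OrderedRing

theorem not_bddAbove_range_natCast_of_forall_isLUB {K : Type*} [Ring K] [LinearOrder K]
    [IsStrictOrderedRing K] (h : ∀ S : Set K, S.Nonempty → BddAbove S → ∃ c : K, IsLUB S c) :
    ¬BddAbove (Set.range ((↑) : ℕ → K)) := by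
  intro hbdd
  obtain ⟨c, hc⟩ := h _ (Set.range_nonempty _) hbdd
  obtain ⟨_, ⟨n, rfl⟩, hn, -⟩ := hc.exists_between (sub_one_lt c)
  have hsucc : ((n + 1 : ℕ) : K) ≤ c := hc.1 ⟨n + 1, rfl⟩
  push_cast at hsucc
  exact hsucc.not_gt (sub_lt_iff_lt_add.mp hn)

/-- Every Cauchy sequence in ℝ((ε)) (with positivity = positive leading coefficient)
converges, yet the field is not Dedekind complete: Cauchy completeness of an ordered
field does not imply Dedekind completeness. -/
theorem laurent_series_cauchy_complete_not_dedekind_complete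
    {K : Type*} [Field K] [LinearOrder K] [IsStrictOrderedRing K] (e : K ≃+* LaurentSeries ℝ)
    (horder : ∀ x : K, 0 < x ↔ 0 < (e x).leadingCoeff) :
    (∀ a : ℕ → K,
      (∀ η : K, 0 < η → ∃ N : ℕ, ∀ m ≥ N, ∀ n ≥ N, |a m - a n| < η) →
      ∃ L : K, ∀ η : K, 0 < η → ∃ N : ℕ, ∀ n ≥ N, |a n - L| < η) ∧
    ¬(∀ S : Set K, S.Nonempty → BddAbove S → ∃ c : K, IsLUB S c) :=
  ⟨exists_forall_abs_sub_lt_of_cauchy horder e.surjective, fun hlub ↦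
    not_bddAbove_range_natCast_of_forall_isLUB hlub
      (bddAbove_range_natCast_of_pos_iff horder e.surjective)⟩
end

section
/- In the ordered field of formal Laurent series R((ε)), every series whose terms tend to 0 converges (in particular the Alternating Series Test and the Absolute Convergence Property hold), yet the field is not Dedekind complete. -/
/-!
By `horder`, `e` carries the order of `K` to the lexicographic order of `ℝ((ε))`, in which a series
of larger order has smaller absolute value. So `a n → 0` means exactly that the orders of `e (a n)`
tend to `∞`. Then each coefficient receives only finitely many nonzero contributions, the
coefficientwise (Hahn) sum of the `e (a n)` exists, and below any given degree the partial sums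
eventually agree with it.

A series `single g' r` with `g < g'` and `r > 0` is positive but infinitely smaller than
`single g r`, so `K` is not archimedean, whereas an ordered group with least upper bounds is: if `c`
were the least upper bound of the multiples `n • y` of some `y > 0`, then `c - y` would be an upper
bound too.
-/

open Filter Topology HahnSeries

theorem archimedean_of_forall_exists_isLUB {α : Type*} [AddCommGroup α] [LinearOrder α]
    [IsOrderedAddMonoid α] (h : ∀ S : Set α, S.Nonempty → BddAbove S → ∃ c, IsLUB S c) :
    Archimedean α := by
  refine ⟨fun x y hy => ?_⟩
  by_contra! hlt
  obtain ⟨c, hc⟩ := h (Set.range fun n : ℕ => n • y) ⟨_, 0, rfl⟩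
    ⟨x, Set.forall_mem_range.2 fun n => (hlt n).le⟩
  have hle : c ≤ c - y := hc.2 <| Set.forall_mem_range.2 fun n =>
    le_sub_iff_add_le.2 (by simpa [succ_nsmul] using hc.1 ⟨n + 1, rfl⟩)
  exact (sub_lt_self c hy).not_ge hle

namespace HahnSeries

section Coefficients

variable {Γ R : Type*} [LinearOrder Γ] [Zero R]

theorem coe_lt_orderTop_of_forall_coeff_eq_zero {x : R⟦Γ⟧} {g : Γ}
    (h : ∀ j ≤ g, x.coeff j = 0) : (g : WithTop Γ) < x.orderTop := by
  refine lt_of_not_ge fun hle => ?_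
  have hx : x ≠ 0 := by rintro rfl; simp at hle
  obtain ⟨m, hm⟩ := WithTop.ne_top_iff_exists.mp (orderTop_ne_top.2 hx)
  exact coeff_orderTop_ne hm.symm (h m (WithTop.coe_le_coe.mp (hm ▸ hle)))

end Coefficients

section TendstoOrderTop

variable {Γ R α : Type*} [LinearOrder Γ] [TopologicalSpace Γ] [OrderTopology Γ]

theorem finite_setOf_not_lt_orderTop [Zero R] {b : α → R⟦Γ⟧}
    (hb : Tendsto (fun i => (b i).orderTop) cofinite (𝓝 ⊤)) (g : Γ) :
    {i | ¬ (g : WithTop Γ) < (b i).orderTop}.Finite :=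
  (WithTop.tendsto_nhds_top_iff _).1 hb g

namespace SummableFamily

def ofTendstoOrderTop [AddCommMonoid R] (b : α → R⟦Γ⟧)
    (hb : Tendsto (fun i => (b i).orderTop) cofinite (𝓝 ⊤)) : SummableFamily Γ R α where
  toFun := b
  isPWO_iUnion_support' := by
    rw [Set.isPWO_iff_isWF, Set.isWF_iff_no_descending_seq]
    intro f hf hmem
    -- a descending sequence stays below `f 0`, so inside the supports of the finitely many `b i`
    -- whose order is at most `f 0`
    set T := (finite_setOf_not_lt_orderTop hb (f 0)).toFinset
    have hsub : ∀ n, f n ∈ ⋃ i ∈ T, (b i).support := by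
      intro n
      obtain ⟨i, hi⟩ := Set.mem_iUnion.1 (hmem n)
      refine Set.mem_biUnion ?_ hi
      rw [Finset.mem_coe, Set.Finite.mem_toFinset]
      exact fun hlt => hi (coeff_eq_zero_of_lt_orderTop
        (lt_of_le_of_lt (WithTop.coe_le_coe.2 (hf.antitone (Nat.zero_le n))) hlt))
    exact Set.isWF_iff_no_descending_seq.1 (T.isWF_bUnion.2 fun i _ => (b i).isWF_support) f hf
      hsub
  finite_co_support' g := (finite_setOf_not_lt_orderTop hb g).subset fun i hi hlt =>
    hi (coeff_eq_zero_of_lt_orderTop hlt)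

@[simp]
theorem coe_ofTendstoOrderTop [AddCommMonoid R] (b : α → R⟦Γ⟧)
    (hb : Tendsto (fun i => (b i).orderTop) cofinite (𝓝 ⊤)) : ⇑(ofTendstoOrderTop b hb) = b :=
  rfl

theorem tendsto_orderTop_sum_sub_hsum [AddCommGroup R] (b : α → R⟦Γ⟧)
    (hb : Tendsto (fun i => (b i).orderTop) cofinite (𝓝 ⊤)) :
    Tendsto (fun t : Finset α => (∑ i ∈ t, b i - (ofTendstoOrderTop b hb).hsum).orderTop)
      atTop (𝓝 ⊤) := by
  refine (WithTop.tendsto_nhds_top_iff _).2 fun g => ?_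
  filter_upwards [eventually_ge_atTop (finite_setOf_not_lt_orderTop hb g).toFinset] with t ht
  refine coe_lt_orderTop_of_forall_coeff_eq_zero fun j hj => ?_
  have hsupp : {i | (b i).coeff j ≠ 0} ⊆ t := fun i hi => ht <| by
    simpa using fun hlt =>
      hi (coeff_eq_zero_of_lt_orderTop ((WithTop.coe_le_coe.2 hj).trans_lt hlt))
  rw [coeff_sub, coeff_hsum_eq_sum_of_subset hsupp, coeff_sum, coe_ofTendstoOrderTop, sub_self]

end SummableFamily

end TendstoOrderTop

section LexOrder

variable {Γ R K : Type*} [LinearOrder Γ] [AddCommGroup R] [LinearOrder R] [IsOrderedAddMonoid R]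
  [AddCommGroup K] [LinearOrder K] [IsOrderedAddMonoid K] (e : K ≃+ R⟦Γ⟧)

theorem toLex_lt_toLex_iff_of_leadingCoeff (he : ∀ x, 0 < x ↔ 0 < (e x).leadingCoeff)
    {x y : K} : toLex (e x) < toLex (e y) ↔ x < y := by
  rw [← sub_pos, ← leadingCoeff_pos_iff, ofLex_sub, ofLex_toLex, ofLex_toLex, ← map_sub, ← he,
    sub_pos]

theorem toLex_abs_of_leadingCoeff (he : ∀ x, 0 < x ↔ 0 < (e x).leadingCoeff) (x : K) :
    toLex (e |x|) = |toLex (e x)| := by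
  have hmono : StrictMono fun x => toLex (e x) :=
    fun _ _ => (toLex_lt_toLex_iff_of_leadingCoeff e he).2
  rw [abs_eq_max_neg, abs_eq_max_neg, hmono.monotone.map_max, map_neg, toLex_neg]

theorem abs_lt_abs_of_orderTop_lt (he : ∀ x, 0 < x ↔ 0 < (e x).leadingCoeff) {x y : K}
    (h : (e y).orderTop < (e x).orderTop) : |x| < |y| := by
  rw [← toLex_lt_toLex_iff_of_leadingCoeff e he, toLex_abs_of_leadingCoeff e he,
    toLex_abs_of_leadingCoeff e he]
  exact abs_lt_abs_of_orderTop_ofLex h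

theorem orderTop_le_of_abs_lt (he : ∀ x, 0 < x ↔ 0 < (e x).leadingCoeff) {x y : K}
    (h : |x| < |y|) : (e y).orderTop ≤ (e x).orderTop :=
  le_of_not_gt fun h' => (abs_lt_abs_of_orderTop_lt e he h').asymm h

theorem tendsto_orderTop_nhds_top_iff [TopologicalSpace Γ] [OrderTopology Γ] [NoMaxOrder Γ]
    [Nontrivial R] (he : ∀ x, 0 < x ↔ 0 < (e x).leadingCoeff) {α : Type*} {l : Filter α}
    {x : α → K} :
    Tendsto (fun i => (e (x i)).orderTop) l (𝓝 ⊤) ↔ ∀ η > 0, ∀ᶠ i in l, |x i| < η := by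
  rw [WithTop.tendsto_nhds_top_iff]
  constructor
  · intro h η hη
    have hη0 : e η ≠ 0 := fun h0 => by simp [he, h0] at hη
    obtain ⟨g, hg⟩ := WithTop.ne_top_iff_exists.1 (orderTop_ne_top.2 hη0)
    filter_upwards [h g] with i hi
    exact abs_of_pos hη ▸ abs_lt_abs_of_orderTop_lt e he (hg ▸ hi)
  · intro h g
    obtain ⟨g', hg'⟩ := exists_gt g
    obtain ⟨r, hr⟩ := exists_gt (0 : R)
    have hη : 0 < e.symm (single g' r) := by
      rwa [he, e.apply_symm_apply, leadingCoeff_of_single]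
    filter_upwards [h _ hη] with i hi
    have hle := orderTop_le_of_abs_lt e he (hi.trans_le (le_abs_self _))
    rw [e.apply_symm_apply, orderTop_single hr.ne'] at hle
    exact (WithTop.coe_lt_coe.2 hg').trans_le hle

theorem not_archimedean_of_leadingCoeff [Nontrivial Γ] [Nontrivial R]
    (he : ∀ x, 0 < x ↔ 0 < (e x).leadingCoeff) : ¬ Archimedean K := by
  intro hK
  obtain ⟨g, g', hgg'⟩ := exists_pair_lt Γ
  obtain ⟨r, hr⟩ := exists_gt (0 : R)
  have hpos (γ : Γ) : 0 < e.symm (single γ r) := by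
    rwa [he, e.apply_symm_apply, leadingCoeff_of_single]
  obtain ⟨n, hn⟩ := Archimedean.arch (e.symm (single g r)) (hpos g')
  have hlt : |n • e.symm (single g' r)| < |e.symm (single g r)| := by
    refine abs_lt_abs_of_orderTop_lt e he ?_
    rw [map_nsmul, e.apply_symm_apply, e.apply_symm_apply, orderTop_single hr.ne']
    exact (WithTop.coe_lt_coe.2 hgg').trans_le
      (orderTop_single_le.trans (orderTop_le_orderTop_smul _ _))
  rw [abs_of_pos (hpos g), abs_of_nonneg (nsmul_nonneg (hpos g').le n)] at hlt
  exact hlt.not_ge hn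

end LexOrder

end HahnSeries

/-- In ℝ((ε)) (positivity = positive leading coefficient), every series whose terms
tend to 0 converges, yet the field is not Dedekind complete. -/
theorem laurent_series_series_converge_not_dedekind_complete
    {K : Type*} [Field K] [LinearOrder K] [IsStrictOrderedRing K] (e : K ≃+* LaurentSeries ℝ)
    (horder : ∀ x : K, 0 < x ↔ 0 < (e x).leadingCoeff) :
    (∀ a : ℕ → K,
      (∀ η : K, 0 < η → ∃ N : ℕ, ∀ n ≥ N, |a n| < η) →
      ∃ S : K, ∀ η : K, 0 < η → ∃ N : ℕ, ∀ n ≥ N,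
        |(∑ k ∈ Finset.range n, a k) - S| < η) ∧
    ¬(∀ S : Set K, S.Nonempty → BddAbove S → ∃ c : K, IsLUB S c) := by
  refine ⟨fun a ha => ?_, fun hcomplete => not_archimedean_of_leadingCoeff e.toAddEquiv horder
    (archimedean_of_forall_exists_isLUB hcomplete)⟩
  have hb : Tendsto (fun n => (e (a n)).orderTop) cofinite (𝓝 ⊤) := by
    rw [Nat.cofinite_eq_atTop]
    exact (tendsto_orderTop_nhds_top_iff e.toAddEquiv horder).2
      fun η hη => eventually_atTop.2 (ha η hη)
  refine ⟨e.symm (SummableFamily.ofTendstoOrderTop _ hb).hsum, fun η hη => eventually_atTop.1 ?_⟩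
  refine (tendsto_orderTop_nhds_top_iff e.toAddEquiv horder).1 ?_ η hη
  simpa [Function.comp_def, map_sum] using
    (SummableFamily.tendsto_orderTop_sum_sub_hsum _ hb).comp tendsto_finset_range
end

section
/- If an ordered field R satisfies the Contraction Map Property—every map f : R → R with |f(x) - f(y)| ≤ c|x - y| for all x, y, for some constant c < 1 in R, has a fixed point—then R is Archimedean. -/
/-!
Suppose some `M` dominates every natural number, and let `S` be the set of elements lying below
some natural number; then `0 ∈ S`, `M ∉ S`, and any element of `S` lies at least `2` below any
element outside `S`. The map `x ↦ (1 - M⁻¹) x + 1_S(x)` is then a contraction: inside and outside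
`S` it is affine with slope `c = 1 - M⁻¹`, and across the boundary the jump `1` is absorbed by
`c |x - y| ≥ 1`. Its only candidate fixed points are `x = M · 1_S(x)`, i.e. `0 ∉ S` or `M ∈ S`,
both impossible.
-/

open Set

section

variable {R : Type*} [Field R] [LinearOrder R] [IsStrictOrderedRing R]

lemma abs_mul_add_one_sub_mul_le {c x y : R} (hc : 0 ≤ c) (h : 1 ≤ c * (y - x)) :
    |c * x + 1 - c * y| ≤ c * |x - y| := by
  have hxy : x - y < 0 := by
    by_contra! hyx
    nlinarith
  rw [abs_of_neg hxy, abs_le]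
  constructor <;> nlinarith

lemma abs_mul_add_indicator_sub_le (S : Set R) {c : R} (hc : 0 ≤ c)
    (hS : ∀ x ∈ S, ∀ y ∉ S, 1 ≤ c * (y - x)) (x y : R) :
    |c * x + S.indicator 1 x - (c * y + S.indicator 1 y)| ≤ c * |x - y| := by
  have affine : ∀ t : R, |c * x + t - (c * y + t)| ≤ c * |x - y| := fun t => by
    rw [add_sub_add_right_eq_sub, ← mul_sub, abs_mul, abs_of_nonneg hc]
  by_cases hx : x ∈ S <;> by_cases hy : y ∈ S
  · rw [indicator_of_mem hx, indicator_of_mem hy]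
    exact affine _
  · rw [indicator_of_mem hx, indicator_of_notMem hy, add_zero, Pi.one_apply]
    exact abs_mul_add_one_sub_mul_le hc (hS x hx y hy)
  · rw [indicator_of_notMem hx, indicator_of_mem hy, add_zero, Pi.one_apply, abs_sub_comm,
      abs_sub_comm x]
    exact abs_mul_add_one_sub_mul_le hc (hS y hy x hx)
  · rw [indicator_of_notMem hx, indicator_of_notMem hy]
    exact affine _

lemma one_sub_inv_mul_add_eq_self_iff {M : R} (hM : M ≠ 0) (x t : R) :
    (1 - M⁻¹) * x + t = x ↔ x = M * t := by
  constructor <;> intro h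
  · field_simp at h
    linarith
  · rw [h]
    field_simp
    ring

lemma one_sub_inv_mul_add_indicator_ne_self {S : Set R} {M : R} (h0 : 0 ∈ S) (hM : M ∉ S)
    (x : R) : (1 - M⁻¹) * x + S.indicator 1 x ≠ x := by
  have hM0 : M ≠ 0 := fun h => hM (h ▸ h0)
  rw [Ne, one_sub_inv_mul_add_eq_self_iff hM0]
  by_cases hx : x ∈ S
  · rw [indicator_of_mem hx, Pi.one_apply, mul_one]
    exact fun h => hM (h ▸ hx)
  · rw [indicator_of_notMem hx, mul_zero]
    exact fun h => hx (h ▸ h0)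

end

theorem contraction_map_property_implies_archimedean
    {R : Type*} [Field R] [LinearOrder R] [IsStrictOrderedRing R]
    (hcontr : ∀ (f : R → R) (c : R), 0 ≤ c → c < 1 →
      (∀ x y : R, |f x - f y| ≤ c * |x - y|) → ∃ x : R, f x = x) :
    ∀ x : R, ∃ n : ℕ, x < (n : R) := by
  by_contra! h
  obtain ⟨M, hM⟩ := h
  set S : Set R := {x | ∃ n : ℕ, x < n}
  have hMS : M ∉ S := fun ⟨n, hn⟩ => (hM n).not_gt hn
  have h0S : (0 : R) ∈ S := ⟨1, one_pos.trans_eq Nat.cast_one.symm⟩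
  have hM2 : (2 : R) ≤ M := by exact_mod_cast hM 2
  have hinv : M⁻¹ ≤ 1 / 2 := by
    rw [one_div]
    exact inv_anti₀ two_pos hM2
  have hinv0 : 0 < M⁻¹ := inv_pos.mpr (two_pos.trans_le hM2)
  have hgap : ∀ x ∈ S, ∀ y ∉ S, 1 ≤ (1 - M⁻¹) * (y - x) := by
    rintro x ⟨n, hn⟩ y hy
    have h2 : x + 2 ≤ y := by
      have hny : ((n + 2 : ℕ) : R) ≤ y := not_lt.mp fun h => hy ⟨n + 2, h⟩
      push_cast at hny
      linarith
    nlinarith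
  obtain ⟨x, hx⟩ := hcontr (fun x => (1 - M⁻¹) * x + S.indicator 1 x) (1 - M⁻¹)
    (by linarith) (by linarith) (abs_mul_add_indicator_sub_le S (by linarith) hgap)
  exact one_sub_inv_mul_add_indicator_ne_self h0S hMS x hx
end
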